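/- arXiv:math-ph/0506051 — 6 statements merged into one kernel-verified Lean document; each statement's English description precedes it below -/
import Mathlib

section
/- Let X be a locally compact abelian topological group, φ : X → ℂ uniformly continuous, and 𝔣 a filter on X. Let 𝔣° be the envelope of 𝔣, i.e. the filter generated by the sets F + V where F ∈ 𝔣 and V is a neighborhood of 0. Then lim_{𝔣} φ exists if and only if lim_{𝔣°} φ exists, and in that case the limits are equal. -/
/-!
The envelope of `𝔣` is the pointwise sum `𝔣 + 𝓝 0`, i.e. the image of `𝔣 ×ˢ 𝓝 0` under
`(x, v) ↦ x + v`. Uniform continuity makes `φ (x + v)` uniformly close to `φ x` as `v → 0`,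
so `φ` has the same limits along `𝔣 + 𝓝 0` as along `𝔣`.
-/

open Filter Topology Pointwise Uniformity

theorem Filter.add_eq_generate {X : Type*} [Add X] (f g : Filter X) :
    f + g = generate {S | ∃ F ∈ f, ∃ V ∈ g, S = F + V} := by
  refine le_antisymm (le_generate_iff.2 ?_) fun s hs => ?_
  · rintro _ ⟨F, hF, V, hV, rfl⟩
    exact add_mem_add hF hV
  · obtain ⟨F, hF, V, hV, hs⟩ := mem_add.1 hs
    exact mem_of_superset (mem_generate_of_mem ⟨F, hF, V, hV, rfl⟩) hs

theorem UniformContinuous.tendsto_add_nhds_zero_iff {X Y : Type*} [UniformSpace X] [AddGroup X]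
    [IsLeftUniformAddGroup X] [UniformSpace Y] {φ : X → Y} (hφ : UniformContinuous φ)
    (f : Filter X) (c : Y) :
    Tendsto φ (f + 𝓝 0) (𝓝 c) ↔ Tendsto φ f (𝓝 c) := by
  have hclose : Tendsto (fun p : X × X => (p.1, p.1 + p.2)) (f ×ˢ 𝓝 0) (𝓤 X) := by
    rw [uniformity_eq_comap_neg_add_nhds_zero, tendsto_comap_iff]
    simpa [Function.comp_def] using tendsto_snd
  rw [← map₂_add, ← map_uncurry_prod, tendsto_map'_iff]
  conv_rhs => rw [← map_fst_prod f (𝓝 (0 : X)), tendsto_map'_iff]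
  exact (Uniform.tendsto_congr <|
    Tendsto.comp (g := fun q : X × X => (φ q.1, φ q.2)) hφ hclose).symm

theorem stmt_1_general {X : Type*} [UniformSpace X] [AddCommGroup X] [IsUniformAddGroup X]
    (φ : X → ℂ) (hφu : UniformContinuous φ) (𝔣 : Filter X)
    (env : Filter X)
    (henv : env = Filter.generate {S : Set X | ∃ F ∈ 𝔣, ∃ V ∈ 𝓝 (0 : X), S = F + V}) :
    ∀ c : ℂ, Tendsto φ 𝔣 (𝓝 c) ↔ Tendsto φ env (𝓝 c) := by
  intro c
  rw [henv, ← Filter.add_eq_generate, hφu.tendsto_add_nhds_zero_iff]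

/-- For a uniformly continuous `φ : X → ℂ` on a locally compact abelian topological
group and a filter `𝔣`, the limit of `φ` along `𝔣` exists iff it exists along the
envelope `𝔣°` of `𝔣` (the filter generated by the sets `F + V`, `F ∈ 𝔣`,
`V` a neighbourhood of `0`), and in that case the two limits are equal. -/
theorem stmt_1 {X : Type*} [UniformSpace X] [AddCommGroup X] [IsUniformAddGroup X]
    [LocallyCompactSpace X]
    (φ : X → ℂ) (hφu : UniformContinuous φ) (𝔣 : Filter X)
    (env : Filter X)
    (henv : env = Filter.generate {S : Set X | ∃ F ∈ 𝔣, ∃ V ∈ 𝓝 (0 : X), S = F + V}) :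
    ∀ c : ℂ, Tendsto φ 𝔣 (𝓝 c) ↔ Tendsto φ env (𝓝 c) :=
  stmt_1_general φ hφu 𝔣 env henv
end

section
/- Let T be a bounded normal operator on L²(X), where X is a locally compact abelian group, and let U_x denote translation by x. If ‖(U_x − 1)T‖ → 0 as x → 0, then also ‖(U_x − 1)T*‖ → 0 as x → 0. -/
open Filter Topology MeasureTheory ContinuousLinearMap

theorem CStarRing.norm_mul_star_of_isStarNormal {E : Type*} [NonUnitalNormedRing E] [StarRing E]
    [CStarRing E] (a b : E) [IsStarNormal b] : ‖a * star b‖ = ‖a * b‖ := by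
  refine (mul_self_inj (norm_nonneg _) (norm_nonneg _)).mp ?_
  calc ‖a * star b‖ * ‖a * star b‖ = ‖a * (star b * b) * star a‖ := by
        rw [← norm_self_mul_star, star_mul, star_star]; noncomm_ring
    _ = ‖a * (b * star b) * star a‖ := by rw [star_comm_self']
    _ = ‖a * b‖ * ‖a * b‖ := by
        rw [← norm_self_mul_star, star_mul]; noncomm_ring

theorem stmt_7_general {X : Type*} [TopologicalSpace X] [AddCommGroup X]
    [MeasurableSpace X]
    (μ : Measure X)
    (U : X → (Lp ℂ 2 μ →L[ℂ] Lp ℂ 2 μ))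
    (T : Lp ℂ 2 μ →L[ℂ] Lp ℂ 2 μ)
    (hT : T ∘L adjoint T = adjoint T ∘L T)
    (h : Tendsto (fun x : X => ‖(U x - 1) ∘L T‖) (𝓝 0) (𝓝 0)) :
    Tendsto (fun x : X => ‖(U x - 1) ∘L adjoint T‖) (𝓝 0) (𝓝 0) := by
  have : IsStarNormal T := ⟨hT.symm⟩
  simpa only [← star_eq_adjoint, ← mul_def, CStarRing.norm_mul_star_of_isStarNormal] using h

/-- If `T` is a bounded normal operator on `L²(X)` (`X` a locally compact abelian
group with Haar measure) and `U_x` is translation by `x`, then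
`‖(U_x − 1)T‖ → 0` as `x → 0` implies `‖(U_x − 1)T*‖ → 0` as `x → 0`. -/
theorem stmt_7 {X : Type*} [TopologicalSpace X] [AddCommGroup X] [IsTopologicalAddGroup X]
    [LocallyCompactSpace X] [MeasurableSpace X] [BorelSpace X]
    (μ : Measure X) [μ.IsAddHaarMeasure]
    (U : X → (Lp ℂ 2 μ →L[ℂ] Lp ℂ 2 μ))
    (hU : ∀ (x : X) (f : Lp ℂ 2 μ), (U x f : X → ℂ) =ᵐ[μ] fun y => f (x + y))
    (T : Lp ℂ 2 μ →L[ℂ] Lp ℂ 2 μ)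
    (hT : T ∘L adjoint T = adjoint T ∘L T)
    (h : Tendsto (fun x : X => ‖(U x - 1) ∘L T‖) (𝓝 0) (𝓝 0)) :
    Tendsto (fun x : X => ‖(U x - 1) ∘L adjoint T‖) (𝓝 0) (𝓝 0) :=
  stmt_7_general μ U T hT h
end

section
/- Let h : ℝⁿ → ℝ be a C¹ function that is equivalent to a weight (i.e., there are constants c₁, c₂ > 0 and a weight w with c₁ w(k)² ≤ 1+|h(k)| ≤ c₂ w(k)² for large k) and satisfies |h'(k)| ≤ C(1 + |h(k)|) for all k. Then lim_{k→0} sup_p |h(p+k) − h(p)| / (1 + |h(p)|) = 0. -/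
open Filter Topology

/-! Along the segment from `p` to `p + k` with `‖k‖ ≤ 1`, the weight property bounds `1 + |h|` by
`C' (1 + |h p|)`, so the derivative bound makes `h` Lipschitz there with constant
`C C' (1 + |h p|)`. The mean value inequality then gives
`|h (p + k) - h p| / (1 + |h p|) ≤ C C' ‖k‖` uniformly in `p`. -/

section

variable {E : Type*} [NormedAddCommGroup E] [NormedSpace ℝ E]

theorem abs_sub_le_mul_norm_of_norm_fderiv_le_of_weight {f : E → ℝ} (hf : Differentiable ℝ f)
    {C C' : ℝ} (hderiv : ∀ x, ‖fderiv ℝ f x‖ ≤ C * (1 + |f x|)) {p k : E}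
    (hweight : ∀ θ ∈ Set.Icc (0 : ℝ) 1, 1 + |f (p + θ • k)| ≤ C' * (1 + |f p|)) :
    |f (p + k) - f p| ≤ C * C' * ‖k‖ * (1 + |f p|) := by
  have hC : 0 ≤ C :=
    nonneg_of_mul_nonneg_left ((norm_nonneg _).trans (hderiv p)) (by positivity)
  have hsegment : ∀ x ∈ segment ℝ p (p + k), ‖fderiv ℝ f x‖ ≤ C * (C' * (1 + |f p|)) := by
    rintro _ ⟨a, θ, ha, hθ, hsum, rfl⟩
    have hx : a • p + θ • (p + k) = p + θ • k := by
      rw [smul_add, ← add_assoc, ← add_smul, hsum, one_smul]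
    rw [hx]
    exact (hderiv _).trans
      (mul_le_mul_of_nonneg_left (hweight θ ⟨hθ, by linarith⟩) hC)
  have hmvt := (convex_segment p (p + k)).norm_image_sub_le_of_norm_fderiv_le
    (fun x _ => hf x) hsegment (left_mem_segment ℝ p (p + k)) (right_mem_segment ℝ p (p + k))
  rw [add_sub_cancel_left, Real.norm_eq_abs] at hmvt
  linarith

end

theorem tendsto_iSup_nhds_zero_of_le_mul_norm {ι E : Type*} [SeminormedAddCommGroup E]
    {g : E → ι → ℝ} {M : ℝ} (hg₀ : ∀ k i, 0 ≤ g k i)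
    (hg : ∀ᶠ k in 𝓝 0, ∀ i, g k i ≤ M * ‖k‖) :
    Tendsto (fun k => ⨆ i, g k i) (𝓝 0) (𝓝 0) := by
  have hlim : Tendsto (fun k : E => |M| * ‖k‖) (𝓝 0) (𝓝 0) := by
    simpa using (tendsto_norm_zero (E := E)).const_mul |M|
  refine squeeze_zero' (Eventually.of_forall fun k => Real.iSup_nonneg (hg₀ k)) ?_ hlim
  filter_upwards [hg] with k hk
  exact Real.iSup_le (fun i => (hk i).trans (by gcongr; exact le_abs_self M)) (by positivity)

/-- If `h : ℝⁿ → ℝ` is `C¹`, equivalent to a weight (so that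
`1 + |h(p + θ•k)| ≤ C'(1 + |h p|)` for `‖k‖ ≤ 1`, `θ ∈ [0,1]`) and satisfies
`‖h'(k)‖ ≤ C(1 + |h k|)`, then `sup_p |h(p+k) - h(p)| / (1 + |h p|) → 0` as `k → 0`. -/
theorem stmt_10 {n : ℕ} (h : EuclideanSpace ℝ (Fin n) → ℝ)
    (hC1 : ContDiff ℝ 1 h)
    (hderiv : ∃ C : ℝ, ∀ k, ‖fderiv ℝ h k‖ ≤ C * (1 + |h k|))
    (hweight : ∃ C' : ℝ, ∀ (p k : EuclideanSpace ℝ (Fin n)) (θ : ℝ),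
      ‖k‖ ≤ 1 → θ ∈ Set.Icc (0 : ℝ) 1 → 1 + |h (p + θ • k)| ≤ C' * (1 + |h p|)) :
    Tendsto (fun k : EuclideanSpace ℝ (Fin n) =>
        ⨆ p : EuclideanSpace ℝ (Fin n), |h (p + k) - h p| / (1 + |h p|))
      (𝓝 0) (𝓝 0) := by
  obtain ⟨C, hC⟩ := hderiv
  obtain ⟨C', hC'⟩ := hweight
  refine tendsto_iSup_nhds_zero_of_le_mul_norm (M := C * C') (fun k p => by positivity) ?_
  filter_upwards [Metric.closedBall_mem_nhds 0 one_pos] with k hk p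
  rw [div_le_iff₀ (by positivity)]
  exact abs_sub_le_mul_norm_of_norm_fderiv_le_of_weight (hC1.differentiable one_ne_zero) hC
    fun θ hθ => hC' p k θ (by simpa using hk) hθ
end

section
/- Let X be a finite dimensional real vector space and (Y_n)_{n≥0} a sequence of linear subspaces of X. Define Y = ⋂_{n≥0} (∑_{m≥n} Y_m) (where ∑_{m≥n} Y_m is the linear span of the union). Then there exists N such that Y = ∑_{m≥n} Y_m for all n ≥ N; moreover, for every n ≥ N with Y of dimension k, there exist indices n < n₁ < ⋯ < n_k with Y = Y_n + Y_{n₁} + ⋯ + Y_{n_k}. -/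
/-!
The spaces `∑_{m ≥ n} Y m` decrease in `n`, so by finite dimensionality they stabilize from some
`N` on, and the stable value is their intersection `Y`. For `n ≥ N` we have
`Y = Y n + ∑_{m > n} Y m`; starting from `Y n` and greedily adding some `Y m`, `m > n`, not yet
contained in the current space raises the dimension each time, so at most `dim Y` indices are
needed. Padding with further indices (whose spaces lie in `Y` anyway) gives exactly `dim Y`.
-/

open Module

theorem Antitone.exists_forall_ge_iInf_eq {α : Type*} [CompleteLattice α] [WellFoundedLT α]
    {f : ℕ → α} (hf : Antitone f) : ∃ N, ∀ n ≥ N, ⨅ i, f i = f n := by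
  obtain ⟨N, hN⟩ := WellFoundedLT.antitone_chain_condition hf
  refine ⟨N, fun n hn => le_antisymm (iInf_le f n) (le_iInf fun i => ?_)⟩
  rw [← hN n hn]
  rcases le_total i N with hi | hi
  · exact hf hi
  · exact (hN i hi).le

theorem antitone_iSup_ge {α : Type*} [CompleteLattice α] (Y : ℕ → α) :
    Antitone fun n => ⨆ m ≥ n, Y m :=
  fun _ _ hab => biSup_mono fun _ hm => hab.trans hm

theorem Submodule.exists_finset_card_add_finrank_le_of_sup_biSup_eq
    {ι K V : Type*} [DivisionRing K] [AddCommGroup V] [Module K V]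
    (Y : ι → Submodule K V) (S : Set ι) {L : Submodule K V} [FiniteDimensional K L]
    (W : Submodule K V) (hL : W ⊔ ⨆ i ∈ S, Y i = L) :
    ∃ t : Finset ι, ↑t ⊆ S ∧ t.card + finrank K W ≤ finrank K L ∧ W ⊔ t.sup Y = L := by
  classical
  induction h : finrank K L - finrank K W using Nat.strong_induction_on generalizing W with
  | _ d ih =>
  by_cases hW : W = L
  · exact ⟨∅, by simp, by rw [hW]; simp, by simp [hW]⟩
  have hWL : W ≤ L := hL ▸ le_sup_left
  obtain ⟨i, hi, hYi⟩ : ∃ i ∈ S, ¬ Y i ≤ W := by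
    by_contra! hY
    exact hW (le_antisymm hWL (hL ▸ sup_le le_rfl (iSup₂_le hY)))
  have hL' : W ⊔ Y i ⊔ ⨆ j ∈ S, Y j = L := by
    rw [sup_assoc, sup_eq_right.mpr (le_biSup Y hi), hL]
  have hW'L : W ⊔ Y i ≤ L := hL' ▸ le_sup_left
  have : FiniteDimensional K (W ⊔ Y i :) := Submodule.finiteDimensional_of_le hW'L
  have hgrow := Submodule.finrank_lt_finrank_of_lt (left_lt_sup.mpr hYi)
  have hbound := Submodule.finrank_mono hW'L
  obtain ⟨t, htS, hcard, hsup⟩ := ih _ (by omega) (W ⊔ Y i) hL' rfl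
  refine ⟨insert i t, Finset.coe_insert i t ▸ Set.insert_subset hi htS, ?_, ?_⟩
  · have := Finset.card_insert_le i t
    omega
  · rw [Finset.sup_insert, ← sup_assoc, hsup]

theorem Nat.exists_strictMono_gt_of_finset_card_le {n k : ℕ} {t : Finset ℕ}
    (ht : ∀ m ∈ t, n < m) (hk : t.card ≤ k) :
    ∃ ns : Fin k → ℕ, StrictMono ns ∧ (∀ i, n < ns i) ∧ ∀ m ∈ t, ∃ i, ns i = m := by
  have hsub : t ⊆ t ∪ Finset.Ioc n (n + k) := Finset.subset_union_left
  obtain ⟨u, htu, hu, hcard⟩ := Finset.exists_subsuperset_card_eq hsub hk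
    (by simpa using Finset.card_le_card (Finset.subset_union_right (s₁ := t)
      (s₂ := Finset.Ioc n (n + k))))
  refine ⟨u.orderEmbOfFin hcard, (u.orderEmbOfFin hcard).strictMono, fun i => ?_, fun m hm => ?_⟩
  · rcases Finset.mem_union.mp (hu (u.orderEmbOfFin_mem hcard i)) with h | h
    · exact ht _ h
    · exact (Finset.mem_Ioc.mp h).1
  · rw [← Set.mem_range, Finset.range_orderEmbOfFin]
    exact htu hm

/-- Let `(Y n)` be a sequence of subspaces of a finite dimensional real vector space
and `Y = ⋂ₙ ∑_{m ≥ n} Y m`. Then the decreasing sequence `∑_{m ≥ n} Y m` stabilizes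
at some `N` to `Y`, and if `k = dim Y` then for every `n ≥ N` there are indices
`n < n₁ < ⋯ < n_k` with `Y = Y n + Y n₁ + ⋯ + Y n_k`. -/
theorem stmt_12 {V : Type*} [AddCommGroup V] [Module ℝ V] [FiniteDimensional ℝ V]
    (Y : ℕ → Submodule ℝ V)
    (Ylim : Submodule ℝ V) (hYlim : Ylim = ⨅ n : ℕ, ⨆ m ≥ n, Y m) :
    ∃ N : ℕ, (∀ n ≥ N, Ylim = ⨆ m ≥ n, Y m) ∧
      ∀ n ≥ N, ∃ ns : Fin (Module.finrank ℝ Ylim) → ℕ,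
        StrictMono ns ∧ (∀ i, n < ns i) ∧ Ylim = Y n ⊔ ⨆ i, Y (ns i) := by
  obtain ⟨N, hN⟩ := (antitone_iSup_ge Y).exists_forall_ge_iInf_eq
  have hstable : ∀ n ≥ N, Ylim = ⨆ m ≥ n, Y m := fun n hn => hYlim.trans (hN n hn)
  refine ⟨N, hstable, fun n hn => ?_⟩
  have hsplit : Y n ⊔ ⨆ m ∈ Set.Ioi n, Y m = Ylim := by
    rw [hstable n hn, biSup_ge_eq_sup]
    rfl
  have hle : ∀ m ≥ n, Y m ≤ Ylim := fun m hm => hstable n hn ▸ le_biSup Y hm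
  obtain ⟨t, htS, hcard, hsup⟩ :=
    Submodule.exists_finset_card_add_finrank_le_of_sup_biSup_eq Y _ (Y n) hsplit
  obtain ⟨ns, hmono, hgt, hrange⟩ :=
    Nat.exists_strictMono_gt_of_finset_card_le htS (k := finrank ℝ Ylim) (by omega)
  refine ⟨ns, hmono, hgt,
    le_antisymm ?_ (sup_le (hle n le_rfl) (iSup_le fun i => hle _ (hgt i).le))⟩
  refine hsup.ge.trans (sup_le_sup_left ?_ _)
  refine Finset.sup_le fun m hm => ?_
  obtain ⟨i, rfl⟩ := hrange m hm
  exact le_iSup (Y ∘ ns) i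
end

section
/- Let H be a Hilbert space and B₂ ⊆ B(H) a closed subspace which is a left ideal and has the property: if S ∈ B(H) and S*S ≤ ∑_{j=1}^n T_j* T_j with T_j ∈ B₂, then S ∈ B₂. Let B₁ be the linear span of {S*T : S, T ∈ B₂}. Then B₁ is a hereditary *-subalgebra of B(H): it is closed under adjoints and products, and if 0 ≤ S ≤ T with T ∈ B₁ then S ∈ B₁. Moreover, for S ≥ 0, S ∈ B₁ if and only if √S ∈ B₂. -/
/-!
From `(S - T)* (S - T) ≥ 0` one gets `S* T + T* S ≤ S* S + T* T`, so for every `A ∈ B₁` the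
self-adjoint part `A + A*` is dominated by a finite sum `∑ Fⱼ* Fⱼ` with `Fⱼ ∈ B₂`. If
`0 ≤ S ≤ T ∈ B₁`, then `(√S)* √S = S ≤ 2S ≤ T + T*`, so the domination property puts `√S` in
`B₂` and hence `S = (√S)* √S` in `B₁`. Closure under products holds because
`S₁* T₁ S₂* T₂ = S₁* (T₁ S₂* T₂)` and `B₂` is a left ideal.
-/

section StarRing

variable {R A : Type*} [CommRing R] [Ring A] [StarRing A] [Algebra R A]

variable (R) in
/-- The paper's `B₁`, for `B = B₂`. -/
def starMulSpan (B : Set A) : Submodule R A :=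
  Submodule.span R {x | ∃ S ∈ B, ∃ T ∈ B, x = star S * T}

variable {B : Set A}

theorem star_mul_mem_starMulSpan {S T : A} (hS : S ∈ B) (hT : T ∈ B) :
    star S * T ∈ starMulSpan R B :=
  Submodule.subset_span ⟨S, hS, T, hT, rfl⟩

theorem star_mem_starMulSpan [StarRing R] [StarModule R A] {x : A}
    (hx : x ∈ starMulSpan R B) : star x ∈ starMulSpan R B := by
  induction hx using Submodule.span_induction with
  | mem x hx =>
    obtain ⟨S, hS, T, hT, rfl⟩ := hx
    simpa only [star_mul, star_star] using star_mul_mem_starMulSpan hT hS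
  | zero => simp
  | add x y _ _ hx hy => simpa only [star_add] using Submodule.add_mem _ hx hy
  | smul c x _ hx => simpa only [star_smul] using Submodule.smul_mem _ _ hx

theorem mul_mem_starMulSpan (hideal : ∀ a T, T ∈ B → a * T ∈ B) {x y : A}
    (hx : x ∈ starMulSpan R B) (hy : y ∈ starMulSpan R B) :
    x * y ∈ starMulSpan R B := by
  have hxy := Submodule.mul_mem_mul hx hy
  rw [starMulSpan, Submodule.span_mul_span] at hxy
  refine Submodule.span_le.mpr ?_ hxy
  rintro _ ⟨_, ⟨S₁, hS₁, T₁, hT₁, rfl⟩, _, ⟨S₂, hS₂, T₂, hT₂, rfl⟩, rfl⟩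
  change star S₁ * T₁ * (star S₂ * T₂) ∈ starMulSpan R B
  simpa only [mul_assoc] using
    star_mul_mem_starMulSpan (R := R) hS₁ (hideal (T₁ * star S₂) T₂ hT₂)

section Order

variable [PartialOrder A]

def DominatedBy (B : Set A) (x : A) : Prop :=
  ∃ (n : ℕ) (F : Fin n → A), (∀ j, F j ∈ B) ∧ x ≤ ∑ j, star (F j) * F j

theorem DominatedBy.mono {x y : A} (hy : DominatedBy B y) (hxy : x ≤ y) : DominatedBy B x :=
  let ⟨n, F, hF, hle⟩ := hy
  ⟨n, F, hF, hxy.trans hle⟩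

theorem DominatedBy.zero : DominatedBy B 0 :=
  ⟨0, Fin.elim0, fun j => j.elim0, by simp⟩

variable [StarOrderedRing A]

theorem DominatedBy.add {x y : A} (hx : DominatedBy B x) (hy : DominatedBy B y) :
    DominatedBy B (x + y) := by
  obtain ⟨m, F, hF, hx⟩ := hx
  obtain ⟨n, G, hG, hy⟩ := hy
  refine ⟨m + n, Fin.append F G, Fin.addCases (by simpa using hF) (by simpa using hG), ?_⟩
  simpa only [Fin.sum_univ_add, Fin.append_left, Fin.append_right] using add_le_add hx hy

theorem star_mul_add_star_mul_le (S T : A) :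
    star S * T + star T * S ≤ star S * S + star T * T := by
  have h := star_mul_self_nonneg (S - T)
  rw [star_sub] at h
  refine sub_nonneg.mp (h.trans_eq ?_)
  noncomm_ring

theorem dominatedBy_star_mul_add {S T : A} (hS : S ∈ B) (hT : T ∈ B) :
    DominatedBy B (star S * T + star T * S) :=
  ⟨2, ![S, T], Fin.forall_fin_two.mpr ⟨hS, hT⟩, by
    simpa [Fin.sum_univ_two] using star_mul_add_star_mul_le S T⟩

theorem dominatedBy_add_star_of_mem_starMulSpan [StarRing R] [StarModule R A]
    (hideal : ∀ a T, T ∈ B → a * T ∈ B) {x : A} (hx : x ∈ starMulSpan R B) :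
    DominatedBy B (x + star x) := by
  -- `x ↦ x + star x` is not `R`-linear, so the induction runs over all scalar multiples at once.
  suffices ∀ c : R, DominatedBy B (c • x + star (c • x)) by simpa using this 1
  induction hx using Submodule.span_induction with
  | mem x hx =>
    obtain ⟨S, hS, T, hT, rfl⟩ := hx
    intro c
    have hcT : c • T ∈ B := by simpa [Algebra.smul_def] using hideal (algebraMap R A c) T hT
    rw [← mul_smul_comm]
    simpa only [star_mul, star_star] using dominatedBy_star_mul_add hS hcT
  | zero => simpa using DominatedBy.zero
  | add x y _ _ hx hy =>
    intro c
    simpa only [smul_add, star_add, add_add_add_comm] using (hx c).add (hy c)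
  | smul c' x _ hx => simpa only [smul_smul] using fun c => hx (c * c')

end Order

end StarRing

section CStarAlgebra

variable {A : Type*} [CStarAlgebra A] [PartialOrder A] [StarOrderedRing A] {B : Set A}

theorem sqrt_mem_of_le_of_mem_starMulSpan (hideal : ∀ a T, T ∈ B → a * T ∈ B)
    (hdom : ∀ S, DominatedBy B (star S * S) → S ∈ B) {S T : A} (hS : 0 ≤ S) (hST : S ≤ T)
    (hT : T ∈ starMulSpan ℂ B) : CFC.sqrt S ∈ B := by
  apply hdom
  rw [(IsSelfAdjoint.of_nonneg (CFC.sqrt_nonneg S)).star_eq, CFC.sqrt_mul_sqrt_self S hS]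
  refine (dominatedBy_add_star_of_mem_starMulSpan hideal hT).mono ?_
  calc S ≤ S + S := le_add_of_nonneg_right hS
    _ ≤ T + star T := by
      rw [(IsSelfAdjoint.of_nonneg (hS.trans hST)).star_eq]
      exact add_le_add hST hST

theorem mem_starMulSpan_of_le (hideal : ∀ a T, T ∈ B → a * T ∈ B)
    (hdom : ∀ S, DominatedBy B (star S * S) → S ∈ B) {S T : A} (hS : 0 ≤ S) (hST : S ≤ T)
    (hT : T ∈ starMulSpan ℂ B) : S ∈ starMulSpan ℂ B := by
  have hR := sqrt_mem_of_le_of_mem_starMulSpan hideal hdom hS hST hT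
  simpa only [(IsSelfAdjoint.of_nonneg (CFC.sqrt_nonneg S)).star_eq, CFC.sqrt_mul_sqrt_self S hS]
    using star_mul_mem_starMulSpan (R := ℂ) hR hR

end CStarAlgebra

open ContinuousLinearMap

theorem stmt_16_general {H : Type*} [NormedAddCommGroup H] [InnerProductSpace ℂ H]
    [CompleteSpace H]
    (B₂ : Set (H →L[ℂ] H))
    (hideal : ∀ (A : H →L[ℂ] H) T, T ∈ B₂ → A ∘L T ∈ B₂)
    (hdom : ∀ (S : H →L[ℂ] H) (n : ℕ) (T : Fin n → (H →L[ℂ] H)),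
      (∀ j, T j ∈ B₂) →
      ((∑ j, adjoint (T j) ∘L T j) - adjoint S ∘L S).IsPositive → S ∈ B₂)
    (B₁ : Set (H →L[ℂ] H))
    (hB₁ : B₁ = ↑(Submodule.span ℂ
      {A : H →L[ℂ] H | ∃ S ∈ B₂, ∃ T ∈ B₂, A = adjoint S ∘L T})) :
    (∀ A ∈ B₁, adjoint A ∈ B₁) ∧
    (∀ A ∈ B₁, ∀ B ∈ B₁, A ∘L B ∈ B₁) ∧
    (∀ S T : H →L[ℂ] H, T ∈ B₁ → S.IsPositive → (T - S).IsPositive → S ∈ B₁) ∧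
    (∀ S : H →L[ℂ] H, S.IsPositive →
      (S ∈ B₁ ↔ ∃ R : H →L[ℂ] H, R.IsPositive ∧ R ∘L R = S ∧ R ∈ B₂)) := by
  obtain rfl : B₁ = starMulSpan ℂ B₂ := hB₁
  have hdom' : ∀ S, DominatedBy B₂ (star S * S) → S ∈ B₂ := by
    rintro S ⟨n, F, hF, hle⟩
    exact hdom S n F hF ((nonneg_iff_isPositive _).mp (sub_nonneg.mpr hle))
  refine ⟨fun A hA => star_mem_starMulSpan hA, fun A hA B hB => mul_mem_starMulSpan hideal hA hB,
    fun S T hT hS hTS => ?_, fun S hS => ⟨fun hSB => ?_, ?_⟩⟩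
  · exact mem_starMulSpan_of_le hideal hdom' ((nonneg_iff_isPositive S).mpr hS)
      (sub_nonneg.mp ((nonneg_iff_isPositive _).mpr hTS)) hT
  · rw [← nonneg_iff_isPositive] at hS
    exact ⟨CFC.sqrt S, (nonneg_iff_isPositive _).mp (CFC.sqrt_nonneg S),
      CFC.sqrt_mul_sqrt_self S hS, sqrt_mem_of_le_of_mem_starMulSpan hideal hdom' hS le_rfl hSB⟩
  · rintro ⟨R, hR, rfl, hRB⟩
    have hRR := star_mul_mem_starMulSpan (R := ℂ) hRB hRB
    rwa [hR.isSelfAdjoint.star_eq] at hRR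

/-- Let `B₂ ⊆ B(H)` be a closed subspace which is a left ideal and satisfies the
domination property: `S*S ≤ ∑ Tⱼ* Tⱼ` with `Tⱼ ∈ B₂` implies `S ∈ B₂`. Then the
linear span `B₁` of `{S*T : S, T ∈ B₂}` is a hereditary *-subalgebra of `B(H)`,
and a positive operator `S` belongs to `B₁` iff its (positive) square root belongs
to `B₂`. -/
theorem stmt_16 {H : Type*} [NormedAddCommGroup H] [InnerProductSpace ℂ H]
    [CompleteSpace H]
    (B₂ : Set (H →L[ℂ] H)) (hclosed : IsClosed B₂) (h0 : (0 : H →L[ℂ] H) ∈ B₂)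
    (hadd : ∀ S T, S ∈ B₂ → T ∈ B₂ → S + T ∈ B₂)
    (hsmul : ∀ (c : ℂ) T, T ∈ B₂ → c • T ∈ B₂)
    (hideal : ∀ (A : H →L[ℂ] H) T, T ∈ B₂ → A ∘L T ∈ B₂)
    (hdom : ∀ (S : H →L[ℂ] H) (n : ℕ) (T : Fin n → (H →L[ℂ] H)),
      (∀ j, T j ∈ B₂) →
      ((∑ j, adjoint (T j) ∘L T j) - adjoint S ∘L S).IsPositive → S ∈ B₂)
    (B₁ : Set (H →L[ℂ] H))
    (hB₁ : B₁ = ↑(Submodule.span ℂ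
      {A : H →L[ℂ] H | ∃ S ∈ B₂, ∃ T ∈ B₂, A = adjoint S ∘L T})) :
    (∀ A ∈ B₁, adjoint A ∈ B₁) ∧
    (∀ A ∈ B₁, ∀ B ∈ B₁, A ∘L B ∈ B₁) ∧
    (∀ S T : H →L[ℂ] H, T ∈ B₁ → S.IsPositive → (T - S).IsPositive → S ∈ B₁) ∧
    (∀ S : H →L[ℂ] H, S.IsPositive →
      (S ∈ B₁ ↔ ∃ R : H →L[ℂ] H, R.IsPositive ∧ R ∘L R = S ∧ R ∈ B₂)) :=
  stmt_16_general B₂ hideal hdom B₁ hB₁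
end

section
/- Let X be a locally compact abelian group and L ⊆ X a sparse set: L is locally finite and for each compact Λ ⊆ X there is a cofinite subset M ⊆ L such that (m+Λ) ∩ (l+Λ) = ∅ whenever m ∈ M, l ∈ L, l ≠ m. Let φ ∈ C(X) be bounded uniformly continuous with support contained in L + K for some compact K, let κ be an ultrafilter on L finer than the Fréchet filter of L, and let x ∈ X. Then the limit function ψ(y) := lim_{l→κ} φ(l + x + y) exists for all y ∈ X and has support contained in K − x; in particular ψ ∈ C₀(X). -/
open Filter Topology Uniformity Pointwise Set

/-! The limit `ψ y = lim_{l → κ} φ (l + x + y)` exists because `φ` is bounded and `κ` is an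
ultrafilter. It is (uniformly) continuous because the translates of `φ` are uniformly
equicontinuous. If `x + y ∉ K`, sparseness of `L` applied to the compact set `K ∪ {x + y}`
shows that for all `l` in a cofinite subset of `L`, the point `l + x + y` lies in the translate
`l + (K ∪ {x + y})`, which meets `L + K` only in `l + K`; hence `φ (l + x + y) = 0` eventually
along `κ`, and `ψ y = 0`. -/

theorem Ultrafilter.exists_tendsto_of_isBounded_range {α E : Type*} [PseudoMetricSpace E]
    [ProperSpace E] (κ : Ultrafilter α) {f : α → E} (hf : Bornology.IsBounded (range f)) :
    ∃ z, Tendsto f κ (𝓝 z) := by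
  have hκf : κ.map f ≤ 𝓟 (closure (range f)) :=
    le_principal_iff.2 (mem_map.2 (univ_mem' fun a => subset_closure (mem_range_self a)))
  obtain ⟨z, -, hz⟩ := hf.isCompact_closure.ultrafilter_le_nhds (κ.map f) hκf
  exact ⟨z, hz⟩

theorem uniformContinuous_of_tendsto_translates {α X E : Type*} [UniformSpace X]
    [AddCommGroup X] [IsUniformAddGroup X] [PseudoMetricSpace E] {f : X → E}
    (hf : UniformContinuous f) {F : Filter α} [F.NeBot] {g : α → X} {ψ : X → E}
    (hψ : ∀ y, Tendsto (fun a => f (g a + y)) F (𝓝 (ψ y))) : UniformContinuous ψ := by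
  refine Metric.uniformity_basis_dist.tendsto_right_iff.2 fun ε hε => ?_
  have hδ : {p : X × X | dist (f p.1) (f p.2) < ε / 2} ∈ 𝓤 X :=
    Metric.uniformity_basis_dist.tendsto_right_iff.1 hf _ (half_pos hε)
  rw [uniformity_eq_comap_nhds_zero X] at hδ ⊢
  obtain ⟨U, hU, hUδ⟩ := mem_comap.1 hδ
  filter_upwards [preimage_mem_comap hU] with p hp
  have hclose : ∀ a, dist (f (g a + p.1)) (f (g a + p.2)) < ε / 2 := fun a =>
    @hUδ (g a + p.1, g a + p.2) (show (g a + p.2) - (g a + p.1) ∈ U by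
      rwa [add_sub_add_left_eq_sub])
  have hle : dist (ψ p.1) (ψ p.2) ≤ ε / 2 :=
    le_of_tendsto ((hψ p.1).dist (hψ p.2)) (Eventually.of_forall fun a => (hclose a).le)
  exact hle.trans_lt (half_lt_self hε)

section Sparse

variable {X : Type*} [AddCommGroup X] {L K : Set X}

theorem add_notMem_add_of_disjoint_translates {z m : X} (hz : z ∉ K) (hm : m ∈ L)
    (hdisj : ∀ l ∈ L, l ≠ m → (m +ᵥ (K ∪ {z})) ∩ (l +ᵥ (K ∪ {z})) = ∅) : m + z ∉ L + K := by
  rintro ⟨l, hl, k, hk, hlk⟩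
  by_cases hlm : l = m
  · subst hlm
    exact hz (add_left_cancel hlk ▸ hk)
  · have hmem : m + z ∈ (m +ᵥ (K ∪ {z})) ∩ (l +ᵥ (K ∪ {z})) :=
      ⟨⟨z, Or.inr rfl, rfl⟩, ⟨k, Or.inl hk, hlk⟩⟩
    rw [hdisj l hl hlm] at hmem
    exact hmem

theorem eventually_add_notMem_add_of_sparse [TopologicalSpace X]
    (hLsparse : ∀ Λ : Set X, IsCompact Λ → ∃ M ⊆ L, (L \ M).Finite ∧
      ∀ m ∈ M, ∀ l ∈ L, l ≠ m → (m +ᵥ Λ) ∩ (l +ᵥ Λ) = ∅)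
    (hK : IsCompact K) {κ : Filter X} (hκ : κ ≤ cofinite) (hL : L ∈ κ) {z : X} (hz : z ∉ K) :
    ∀ᶠ l in κ, l + z ∉ L + K := by
  obtain ⟨M, hML, hfin, hdisj⟩ := hLsparse _ (hK.union isCompact_singleton)
  have hM : M ∈ κ := mem_of_superset (inter_mem hL (hκ hfin.compl_mem_cofinite))
    fun l ⟨hl, hlLM⟩ => by_contra fun hlM => hlLM ⟨hl, hlM⟩
  filter_upwards [hM] with m hm
  exact add_notMem_add_of_disjoint_translates hz (hML hm) (hdisj m hm)

end Sparse

theorem stmt_18_general {X : Type*} [UniformSpace X] [AddCommGroup X] [IsUniformAddGroup X]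
    [NoncompactSpace X]
    (L : Set X)
    (hLsparse : ∀ Λ : Set X, IsCompact Λ → ∃ M ⊆ L, (L \ M).Finite ∧
      ∀ m ∈ M, ∀ l ∈ L, l ≠ m → (m +ᵥ Λ) ∩ (l +ᵥ Λ) = ∅)
    (K : Set X) (hK : IsCompact K)
    (φ : X → ℂ) (hφb : ∃ C, ∀ x, ‖φ x‖ ≤ C) (hφu : UniformContinuous φ)
    (hφsupp : Function.support φ ⊆ L + K)
    (κ : Ultrafilter X) (hκL : L ∈ κ) (hκ : Filter.cocompact X ≤ (κ : Filter X))
    (x : X) :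
    ∃ ψ : X → ℂ,
      (∀ y : X, Tendsto (fun l => φ (l + x + y)) (κ : Filter X) (𝓝 (ψ y))) ∧
      Continuous ψ ∧
      Function.support ψ ⊆ (fun a => a - x) '' K ∧
      Tendsto ψ (Filter.cocompact X) (𝓝 0) := by
  have hκcof : (κ : Filter X) ≤ cofinite := κ.unique hκ ▸ cocompact_le_cofinite
  obtain ⟨C, hC⟩ := hφb
  have hφbdd : Bornology.IsBounded (range φ) :=
    isBounded_iff_forall_norm_le.2 ⟨C, forall_mem_range.2 hC⟩
  choose ψ hψ using fun y => κ.exists_tendsto_of_isBounded_range (f := fun l => φ (l + x + y))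
    (hφbdd.subset (range_comp_subset_range _ φ))
  have hsupp : Function.support ψ ⊆ (fun a => a - x) '' K := by
    intro y hy
    by_contra hyK
    have hxy : x + y ∉ K := fun h => hyK ⟨x + y, h, add_sub_cancel_left x y⟩
    refine hy (tendsto_nhds_unique (hψ y) (tendsto_const_nhds.congr' ?_))
    filter_upwards [eventually_add_notMem_add_of_sparse hLsparse hK hκcof hκL hxy] with l hl
    rw [add_assoc]
    exact (Function.notMem_support.1 fun h => hl (hφsupp h)).symm
  exact ⟨ψ, hψ, (uniformContinuous_of_tendsto_translates hφu hψ).continuous, hsupp,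
    (HasCompactSupport.of_support_subset_isCompact (hK.image (continuous_sub_right x))
      hsupp).is_zero_at_infty⟩

/-- Let `L` be a sparse subset of a locally compact noncompact abelian group `X`,
`φ` bounded uniformly continuous with support in `L + K` (`K` compact), `κ` an
ultrafilter on `L` finer than the Fréchet filter of `L`, and `x ∈ X`. Then
`ψ(y) = lim_{l→κ} φ(l + x + y)` exists for every `y`, `ψ` is continuous with
support contained in `K − x`; in particular `ψ ∈ C₀(X)`. -/
theorem stmt_18 {X : Type*} [UniformSpace X] [AddCommGroup X] [IsUniformAddGroup X]
    [LocallyCompactSpace X] [NoncompactSpace X]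
    (L : Set X)
    (hLfin : ∀ Λ : Set X, IsCompact Λ → (L ∩ Λ).Finite)
    (hLsparse : ∀ Λ : Set X, IsCompact Λ → ∃ M ⊆ L, (L \ M).Finite ∧
      ∀ m ∈ M, ∀ l ∈ L, l ≠ m → (m +ᵥ Λ) ∩ (l +ᵥ Λ) = ∅)
    (K : Set X) (hK : IsCompact K)
    (φ : X → ℂ) (hφb : ∃ C, ∀ x, ‖φ x‖ ≤ C) (hφu : UniformContinuous φ)
    (hφsupp : Function.support φ ⊆ L + K)
    (κ : Ultrafilter X) (hκL : L ∈ κ) (hκ : Filter.cocompact X ≤ (κ : Filter X))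
    (x : X) :
    ∃ ψ : X → ℂ,
      (∀ y : X, Tendsto (fun l => φ (l + x + y)) (κ : Filter X) (𝓝 (ψ y))) ∧
      Continuous ψ ∧
      Function.support ψ ⊆ (fun a => a - x) '' K ∧
      Tendsto ψ (Filter.cocompact X) (𝓝 0) :=
  stmt_18_general L hLsparse K hK φ hφb hφu hφsupp κ hκL hκ x
end
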